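/- arXiv:1706.01080 — 4 statements merged into one kernel-verified Lean document; each statement's English description precedes it below -/
import Mathlib

section
/- Let m ≥ 1 and let a be an associative binary operation on I = Fin m which is uniformly distributed. Let f, g : ℝ → Fin m → ℝ be functions such that Σ_{k=1}^m f(t,k) · g(t,k) = 1/m for every t ∈ ℝ. Define the cubic matrices M^[s,t] by M^[s,t]_{i j k} = f(s,i) · g(t,k) (the entries do not depend on the middle index j). Then this family satisfies the Kolmogorov–Chapman equation with respect to the Maksimov multiplication *_a: for all 0 ≤ s < τ < t and all i, j, r, M^[s,t]_{i j r} = Σ_{(l,n) : a(l,n) = j} Σ_k M^[s,τ]_{i l k} · M^[τ,t]_{k n r}. -/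
open Finset

/-- Maksimov's multiplication of cubic matrices with respect to a binary
operation `a` on `Fin m`:
`(A *_a B)_{i j r} = Σ_{(l,n) : a(l,n) = j} Σ_k A_{i l k} * B_{k n r}`. -/
def maksimovMul {m : ℕ} (a : Fin m → Fin m → Fin m)
    (A B : Fin m → Fin m → Fin m → ℝ) : Fin m → Fin m → Fin m → ℝ :=
  fun i j r =>
    ∑ p ∈ Finset.univ.filter (fun p : Fin m × Fin m => a p.1 p.2 = j),
      ∑ k, A i p.1 k * B k p.2 r

/-- Let `a` be an associative, uniformly distributed binary operation on `Fin m`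
(`m ≥ 1`), and let `f, g : ℝ → Fin m → ℝ` satisfy `Σ_k f(t,k)·g(t,k) = 1/m` for
all `t`. Then the cubic matrices `M^[s,t]_{i j k} = f(s,i)·g(t,k)` satisfy the
Kolmogorov–Chapman equation with respect to the Maksimov multiplication `*_a`. -/
theorem maksimov_uniform_flow_satisfies_KCE {m : ℕ} (hm : 1 ≤ m)
    (a : Fin m → Fin m → Fin m)
    (ha : ∀ i j k : Fin m, a (a i j) k = a i (a j k))
    (haunif : ∀ j : Fin m,
      (Finset.univ.filter (fun p : Fin m × Fin m => a p.1 p.2 = j)).card = m)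
    (f g : ℝ → Fin m → ℝ)
    (hfg : ∀ t : ℝ, ∑ k, f t k * g t k = 1 / (m : ℝ))
    (M : ℝ → ℝ → (Fin m → Fin m → Fin m → ℝ))
    (hM : ∀ (s t : ℝ) (i j k : Fin m), M s t i j k = f s i * g t k) :
    ∀ s τ t : ℝ, 0 ≤ s → s < τ → τ < t →
      M s t = maksimovMul a (M s τ) (M τ t) := by
  intro s τ t _ _ _
  funext i j r
  have hmne : (m : ℝ) ≠ 0 := Nat.cast_ne_zero.mpr (by omega)
  simp only [maksimovMul, hM]
  have hinner : ∀ p : Fin m × Fin m,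
      (∑ k, f s i * g τ k * (f τ k * g t r)) = f s i * g t r * (1 / m) := by
    intro p
    calc ∑ k, f s i * g τ k * (f τ k * g t r)
        = (∑ k, f τ k * g τ k) * (f s i * g t r) := by
          rw [Finset.sum_mul]; apply Finset.sum_congr rfl; intro k _; ring
      _ = f s i * g t r * (1 / m) := by rw [hfg]; ring
  calc f s i * g t r
      = ∑ p ∈ Finset.univ.filter (fun p : Fin m × Fin m => a p.1 p.2 = j),
          (f s i * g t r * (1 / m)) := by
        rw [Finset.sum_const, haunif, nsmul_eq_mul]
        field_simp
    _ = _ := by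
        apply Finset.sum_congr rfl; intro p _
        rw [← hinner p]
end

section
/- Let m ≥ 1. Let g : ℝ → Fin m → ℝ satisfy g(t,i) ≠ 0 for all t and i, and let γ : ℝ → Fin m → Fin m → ℝ satisfy m · Σ_{j=1}^m γ(s,i,j) = g(s,i) for all i and all s ∈ ℝ. Define the cubic matrices M^[s,t] by M^[s,t]_{i j r} = γ(s,i,j) / g(t,r). Then this family satisfies the Kolmogorov–Chapman equation with respect to the multiplication *_{a₀}: for all 0 ≤ s < τ < t and all i, j, r, M^[s,t]_{i j r} = Σ_{k=1}^m Σ_{n=1}^m M^[s,τ]_{i j k} · M^[τ,t]_{k n r}. -/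
open Finset

/-- The Maksimov multiplication `*_{a₀}` of cubic matrices for the operation
`a₀(j,n) = j`: `(A *_{a₀} B)_{i j r} = Σ_k Σ_n A_{i j k} * B_{k n r}`. -/
def maksimovMulA0 {m : ℕ} (A B : Fin m → Fin m → Fin m → ℝ) :
    Fin m → Fin m → Fin m → ℝ :=
  fun i j r => ∑ k, ∑ n, A i j k * B k n r

/-- Let `m ≥ 1`, let `g : ℝ → Fin m → ℝ` be nowhere zero and let
`γ : ℝ → Fin m → Fin m → ℝ` satisfy `m · Σ_j γ(s,i,j) = g(s,i)` for all `i, s`.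
Then the cubic matrices `M^[s,t]_{i j r} = γ(s,i,j) / g(t,r)` satisfy the
Kolmogorov–Chapman equation with respect to the multiplication `*_{a₀}`. -/
theorem maksimov_a0_flow_satisfies_KCE {m : ℕ} (hm : 1 ≤ m)
    (g : ℝ → Fin m → ℝ) (hg : ∀ (t : ℝ) (i : Fin m), g t i ≠ 0)
    (γ : ℝ → Fin m → Fin m → ℝ)
    (hγ : ∀ (s : ℝ) (i : Fin m), (m : ℝ) * ∑ j, γ s i j = g s i)
    (M : ℝ → ℝ → (Fin m → Fin m → Fin m → ℝ))
    (hM : ∀ (s t : ℝ) (i j r : Fin m), M s t i j r = γ s i j / g t r) :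
    ∀ s τ t : ℝ, 0 ≤ s → s < τ → τ < t →
      M s t = maksimovMulA0 (M s τ) (M τ t) := by
  intro s τ t _ _ _
  have hm0 : (m : ℝ) ≠ 0 := Nat.cast_ne_zero.mpr (by omega)
  funext i j r
  simp only [maksimovMulA0, hM]
  have hsum : ∀ k : Fin m, ∑ n, γ τ k n = g τ k / m := by
    intro k
    rw [eq_div_iff hm0, mul_comm, hγ]
  calc γ s i j / g t r
      = ∑ k : Fin m, γ s i j / ((m : ℝ) * g t r) := by
        rw [Finset.sum_const, card_univ, Fintype.card_fin, nsmul_eq_mul]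
        rw [← mul_div_assoc, mul_div_mul_left _ _ hm0]
      _ = ∑ k, ∑ n, γ s i j / g τ k * (γ τ k n / g t r) := by
        refine Finset.sum_congr rfl fun k _ => ?_
        rw [← Finset.mul_sum, ← Finset.sum_div, hsum k]
        field_simp [hg τ k]
end

section
/- Let m ≥ 1, let a and b be binary operations on I = Fin m, and let π be a permutation of I such that a(j,n) = π⁻¹(b(π(j), π(n))) for all j, n ∈ I. Given a family of cubic matrices M^[s,t] indexed by 0 ≤ s < t, define the permuted family by (M̃^[s,t])_{i j r} = M^[s,t]_{π⁻¹(i) π⁻¹(j) π⁻¹(r)}. Then M^[s,t] satisfies the Kolmogorov–Chapman equation with respect to the Maksimov multiplication *_a if and only if M̃^[s,t] satisfies the Kolmogorov–Chapman equation with respect to the Maksimov multiplication *_b. -/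
open Finset

/-- Key conjugation lemma: Maksimov multiplication w.r.t. `b` of permuted
matrices equals the permutation of the multiplication w.r.t. `a`. -/
lemma maksimov_conj_key {m : ℕ} (a b : Fin m → Fin m → Fin m) (π : Equiv.Perm (Fin m))
    (hab : ∀ j n : Fin m, a j n = π.symm (b (π j) (π n)))
    (A B A' B' : Fin m → Fin m → Fin m → ℝ)
    (hA : ∀ i j r, A' i j r = A (π.symm i) (π.symm j) (π.symm r))
    (hB : ∀ i j r, B' i j r = B (π.symm i) (π.symm j) (π.symm r))
    (i j r : Fin m) :
    maksimovMul b A' B' i j r = maksimovMul a A B (π.symm i) (π.symm j) (π.symm r) := by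
  unfold maksimovMul
  refine Finset.sum_equiv ((π.prodCongr π).symm) ?_ ?_
  · intro q
    simp only [Finset.mem_filter, Finset.mem_univ, true_and, Equiv.prodCongr_symm,
      Equiv.prodCongr_apply, Prod.map]
    constructor
    · intro h; rw [hab]; simp [h]
    · intro h
      rw [hab] at h
      simpa using congrArg π h
  · intro q hq
    simp only [Equiv.prodCongr_symm, Equiv.prodCongr_apply, Prod.map]
    rw [← Equiv.sum_comp π.symm (fun k => A (π.symm i) (π.symm q.1) k * B k (π.symm q.2) (π.symm r))]
    exact Finset.sum_congr rfl (fun k _ => by rw [hA, hB])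

/-- Let `a, b` be binary operations on `Fin m` (`m ≥ 1`) conjugate under a
permutation `π`, i.e. `a(j,n) = π⁻¹(b(π(j), π(n)))`. A family of cubic matrices
`M^[s,t]` satisfies the Kolmogorov–Chapman equation for `*_a` iff the permuted
family `M̃^[s,t]_{i j r} = M^[s,t]_{π⁻¹(i) π⁻¹(j) π⁻¹(r)}` satisfies it for `*_b`. -/
theorem maksimov_KCE_conjugate_iff {m : ℕ} (hm : 1 ≤ m)
    (a b : Fin m → Fin m → Fin m) (π : Equiv.Perm (Fin m))
    (hab : ∀ j n : Fin m, a j n = π.symm (b (π j) (π n)))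
    (M : ℝ → ℝ → (Fin m → Fin m → Fin m → ℝ))
    (Mt : ℝ → ℝ → (Fin m → Fin m → Fin m → ℝ))
    (hMt : ∀ (s t : ℝ) (i j r : Fin m),
      Mt s t i j r = M s t (π.symm i) (π.symm j) (π.symm r)) :
    (∀ s τ t : ℝ, 0 ≤ s → s < τ → τ < t → M s t = maksimovMul a (M s τ) (M τ t)) ↔
      (∀ s τ t : ℝ, 0 ≤ s → s < τ → τ < t →
        Mt s t = maksimovMul b (Mt s τ) (Mt τ t)) := by
  have hba : ∀ j n : Fin m, b j n = π.symm.symm (a (π.symm j) (π.symm n)) := by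
    intro j n
    rw [hab]
    simp
  have hMM : ∀ (s t : ℝ) (i j r : Fin m),
      M s t i j r = Mt s t (π.symm.symm i) (π.symm.symm j) (π.symm.symm r) := by
    intro s t i j r
    rw [hMt]
    simp
  constructor
  · intro h s τ t hs hsτ hτt
    funext i j r
    rw [hMt, h s τ t hs hsτ hτt,
      ← maksimov_conj_key a b π hab (M s τ) (M τ t) (Mt s τ) (Mt τ t) (hMt s τ) (hMt τ t)]
  · intro h s τ t hs hsτ hτt
    funext i j r
    rw [hMM, h s τ t hs hsτ hτt,
      ← maksimov_conj_key b a π.symm hba (Mt s τ) (Mt τ t) (M s τ) (M τ t) (hMM s τ) (hMM τ t)]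
end

section
/- Let A be a normed ring and let M : ℝ → ℝ → A be a family satisfying the Kolmogorov–Chapman equation: M(s,t) = M(s,τ) * M(τ,t) for all 0 ≤ s < τ < t. Fix times 0 ≤ s₀ < τ < t and suppose the function s ↦ M(s,τ) has derivative D at s₀ within the interval [0,τ). Then the function s ↦ M(s,t) has derivative D * M(τ,t) at s₀ within [0,τ); this is the forward differential equation ∂/∂s M^[s,t] = (∂/∂s M^[s,τ]) * M^[τ,t]. -/
/-- Forward differential equation for flows of algebras: if `M : ℝ → ℝ → A`
satisfies the Kolmogorov–Chapman equation and `s ↦ M(s,τ)` has derivative `D`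
at `s₀` within `[0,τ)`, then `s ↦ M(s,t)` has derivative `D * M(τ,t)` at `s₀`
within `[0,τ)`, i.e. `∂/∂s M^[s,t] = (∂/∂s M^[s,τ]) * M^[τ,t]`. -/
theorem forward_differential_equation {A : Type*} [NormedRing A] [NormedAlgebra ℝ A]
    (M : ℝ → ℝ → A)
    (hKCE : ∀ s τ t : ℝ, 0 ≤ s → s < τ → τ < t → M s t = M s τ * M τ t)
    (s₀ τ t : ℝ) (hs₀ : 0 ≤ s₀) (hsτ : s₀ < τ) (hτt : τ < t) (D : A)
    (hD : HasDerivWithinAt (fun s => M s τ) D (Set.Ico 0 τ) s₀) :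
    HasDerivWithinAt (fun s => M s t) (D * M τ t) (Set.Ico 0 τ) s₀ := by
  have h := hD.mul_const (M τ t)
  refine h.congr (fun x hx => ?_) ?_
  · exact hKCE x τ t hx.1 hx.2 hτt
  · exact hKCE s₀ τ t hs₀ hsτ hτt
end
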